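/- Suppose eigenvalues of a $d$-component additive RKHS are given by $\mu_{pd+k} = \mu_p^{(k)}$ where for each $k \in \{1,\dots,d\}$ the sequence $(\mu_p^{(k)})_{p\ge1}$ satisfies $c_1 p^{-2m} \le \mu_p^{(k)} \le c_2 p^{-2m}$ for constants $0 < c_1 \le c_2$ and $m > 1/2$. Then there exist constants $0 < C_1 \le C_2$ (depending only on $c_1, c_2, m$) such that for all $\lambda \in (0,1]$ and all $d \ge 1$: $C_1\, d\, \lambda^{-1/(2m)} \le \sum_{\nu\ge1} \frac{1}{1+\lambda/\mu_\nu} \le C_2\, d\, \lambda^{-1/(2m)}$. -/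
import Mathlib


open Real Finset

private lemma aux_summable {m : ℝ} (hm : 1 / 2 < m) :
    Summable (fun p : ℕ => ((p : ℝ) + 1) ^ (-(2 * m))) := by
  have h : Summable (fun p : ℕ => ((p : ℝ)) ^ (-(2 * m))) := by
    rw [Real.summable_nat_rpow]; linarith
  have h2 := (summable_nat_add_iff 1).2 h
  refine h2.congr fun n => ?_
  push_cast
  ring_nf

private lemma frac_mono {a b l : ℝ} (hl : 0 < l) (ha : 0 ≤ a) (hab : a ≤ b) :
    a / (a + l) ≤ b / (b + l) := by
  rw [div_le_div_iff₀ (by linarith) (by linarith)]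
  nlinarith

/-- key telescoping inequality: `(q+1)^{-2m} ≤ (q^{-(2m-1)} - (q+1)^{-(2m-1)})/(2m-1)`. -/
private lemma telescope {m : ℝ} (hm : 1 / 2 < m) {q : ℕ} (hq : 1 ≤ q) :
    ((q : ℝ) + 1) ^ (-(2 * m)) ≤
      (((q : ℝ)) ^ (-(2 * m - 1)) - ((q : ℝ) + 1) ^ (-(2 * m - 1))) / (2 * m - 1) := by
  have hQ : (1 : ℝ) ≤ (q : ℝ) := by exact_mod_cast hq
  have hQ0 : (0 : ℝ) < (q : ℝ) := by linarith
  have hs : (0 : ℝ) < 2 * m - 1 := by linarith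
  set Q : ℝ := (q : ℝ) with hQdef
  -- Bernoulli : (1 + 1/Q)^(2m) ≥ 1 + 2m/Q
  have hbern : 1 + (2 * m) * (1 / Q) ≤ (1 + 1 / Q) ^ (2 * m) :=
    one_add_mul_self_le_rpow_one_add (by
      have h01 : (0:ℝ) ≤ 1 / Q := by positivity
      linarith) (by linarith)
  -- key : (Q+1)^(2m) ≥ Q^(2m) + 2m * Q^(2m-1)
  have hmul : (Q + 1) ^ (2 * m) = Q ^ (2 * m) * (1 + 1 / Q) ^ (2 * m) := by
    rw [← Real.mul_rpow hQ0.le (by positivity)]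
    congr 1
    field_simp
  have hQ2m : Q ^ (2 * m) = Q ^ (2 * m - 1) * Q := by
    rw [← Real.rpow_add_one hQ0.ne']
    ring_nf
  have hkey : Q ^ (2 * m - 1) * (Q + 2 * m) ≤ (Q + 1) ^ (2 * m) := by
    rw [hmul]
    have h1 : Q ^ (2 * m) * (1 + (2 * m) * (1 / Q)) ≤ Q ^ (2 * m) * (1 + 1 / Q) ^ (2 * m) :=
      mul_le_mul_of_nonneg_left hbern (by positivity)
    calc Q ^ (2 * m - 1) * (Q + 2 * m) = Q ^ (2 * m) * (1 + (2 * m) * (1 / Q)) := by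
          rw [hQ2m]; field_simp
      _ ≤ _ := h1
  -- set a := Q^(2m-1), b := (Q+1)^(2m-1)
  set a : ℝ := Q ^ (2 * m - 1) with hadef
  set b : ℝ := (Q + 1) ^ (2 * m - 1) with hbdef
  have ha : 0 < a := Real.rpow_pos_of_pos hQ0 _
  have hb : 0 < b := Real.rpow_pos_of_pos (by linarith) _
  have hQ1 : (Q + 1) ^ (2 * m) = b * (Q + 1) := by
    rw [hbdef, ← Real.rpow_add_one (by positivity : (Q + 1) ≠ 0)]
    ring_nf
  have hkey2 : a * (Q + 2 * m) ≤ b * (Q + 1) := by rw [← hQ1]; exact hkey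
  have hneg : ((Q : ℝ) + 1) ^ (-(2 * m)) = (b * (Q + 1))⁻¹ := by
    rw [← hQ1, Real.rpow_neg (by positivity)]
  rw [hneg, Real.rpow_neg hQ0.le, Real.rpow_neg (by positivity : (0:ℝ) ≤ Q + 1),
    ← hadef, ← hbdef, le_div_iff₀ hs, inv_sub_inv ha.ne' hb.ne', inv_mul_eq_div,
    div_le_div_iff₀ (by positivity) (by positivity)]
  nlinarith [mul_le_mul_of_nonneg_right hkey2 hb.le, mul_pos ha hb,
    mul_pos hb (mul_pos hQ0 hb)]

private lemma tail_bound {m : ℝ} (hm : 1 / 2 < m) {N : ℕ} (hN : 1 ≤ N) :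
    ∑' p : ℕ, ((↑(p + N) : ℝ) + 1) ^ (-(2 * m)) ≤ (N : ℝ) ^ (-(2 * m - 1)) / (2 * m - 1) := by
  have hs : (0 : ℝ) < 2 * m - 1 := by linarith
  have hsum : Summable (fun p : ℕ => ((↑(p + N) : ℝ) + 1) ^ (-(2 * m))) := by
    have := (summable_nat_add_iff N).2 (aux_summable hm)
    exact this.congr fun n => by push_cast; ring_nf
  refine Summable.tsum_le_of_sum_range_le hsum fun n => ?_
  have hstep : ∀ p ∈ Finset.range n, ((↑(p + N) : ℝ) + 1) ^ (-(2 * m)) ≤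
      (((↑(p + N) : ℝ)) ^ (-(2 * m - 1)) - ((↑(p + N) : ℝ) + 1) ^ (-(2 * m - 1))) / (2 * m - 1) :=
    fun p _ => telescope hm (le_trans hN (Nat.le_add_left N p))
  calc ∑ p ∈ Finset.range n, ((↑(p + N) : ℝ) + 1) ^ (-(2 * m))
      ≤ ∑ p ∈ Finset.range n,
        (((↑(p + N) : ℝ)) ^ (-(2 * m - 1)) - ((↑(p + N) : ℝ) + 1) ^ (-(2 * m - 1))) / (2 * m - 1) :=
        Finset.sum_le_sum hstep
    _ = (∑ p ∈ Finset.range n,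
        (((↑(p + N) : ℝ)) ^ (-(2 * m - 1)) - ((↑(p + N) : ℝ) + 1) ^ (-(2 * m - 1)))) / (2 * m - 1) := by
        rw [Finset.sum_div]
    _ ≤ (N : ℝ) ^ (-(2 * m - 1)) / (2 * m - 1) := by
        gcongr
        set f : ℕ → ℝ := fun i => ((↑(i + N) : ℝ)) ^ (-(2 * m - 1)) with hf
        have hterm : ∀ p : ℕ,
            (((↑(p + N) : ℝ)) ^ (-(2 * m - 1)) - ((↑(p + N) : ℝ) + 1) ^ (-(2 * m - 1)))
              = f p - f (p + 1) := by
          intro p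
          have : ((↑(p + N) : ℝ) + 1) = (↑(p + 1 + N) : ℝ) := by push_cast; ring
          rw [this]
        rw [Finset.sum_congr rfl fun p _ => hterm p, Finset.sum_range_sub' f n]
        have h0 : f 0 = (N : ℝ) ^ (-(2 * m - 1)) := by simp [hf]
        have hn : 0 ≤ f n := Real.rpow_nonneg (by positivity) _
        rw [h0]
        linarith

private lemma comp_bound {m c₁ c₂ l : ℝ} (hm : 1 / 2 < m) (hc₁ : 0 < c₁) (hc₁₂ : c₁ ≤ c₂)
    (hl : 0 < l) (hl1 : l ≤ 1) (μ : ℕ → ℝ)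
    (hμ : ∀ p : ℕ, 1 ≤ p →
      c₁ * (p : ℝ) ^ (-(2 * m)) ≤ μ p ∧ μ p ≤ c₂ * (p : ℝ) ^ (-(2 * m))) :
    c₁ / (2 * (c₁ + 1)) * l ^ (-(1 / (2 * m))) ≤ (∑' p : ℕ, μ (p + 1) / (μ (p + 1) + l)) ∧
    (∑' p : ℕ, μ (p + 1) / (μ (p + 1) + l)) ≤
      (c₂ ^ (1 / (2 * m)) * (1 + 1 / (2 * m - 1)) + 1) * l ^ (-(1 / (2 * m))) := by
  have hc₂ : 0 < c₂ := lt_of_lt_of_le hc₁ hc₁₂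
  have h2m : (0 : ℝ) < 2 * m := by linarith
  have hs : (0 : ℝ) < 2 * m - 1 := by linarith
  -- basic facts about each term
  have hcast : ∀ p : ℕ, ((↑(p + 1) : ℕ) : ℝ) = (p : ℝ) + 1 := fun p => by push_cast; ring
  have hqpos : ∀ p : ℕ, (0 : ℝ) < (p : ℝ) + 1 := fun p => by positivity
  have hμlb : ∀ p : ℕ, c₁ * ((p : ℝ) + 1) ^ (-(2 * m)) ≤ μ (p + 1) := by
    intro p
    have := (hμ (p + 1) (Nat.le_add_left 1 p)).1
    rwa [hcast p] at this
  have hμub : ∀ p : ℕ, μ (p + 1) ≤ c₂ * ((p : ℝ) + 1) ^ (-(2 * m)) := by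
    intro p
    have := (hμ (p + 1) (Nat.le_add_left 1 p)).2
    rwa [hcast p] at this
  have hμpos : ∀ p : ℕ, 0 < μ (p + 1) := fun p =>
    lt_of_lt_of_le (by positivity) (hμlb p)
  set f : ℕ → ℝ := fun p => μ (p + 1) / (μ (p + 1) + l) with hf
  have hf0 : ∀ p, 0 ≤ f p := fun p => by
    have := hμpos p; positivity
  have hf1 : ∀ p, f p ≤ 1 := fun p => by
    rw [hf, div_le_one (by have := hμpos p; linarith)]; linarith
  have hfle : ∀ p, f p ≤ c₂ / l * ((p : ℝ) + 1) ^ (-(2 * m)) := by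
    intro p
    have h1 : f p ≤ μ (p + 1) / l := by
      apply div_le_div_of_nonneg_left (hμpos p).le hl
      linarith [hμpos p]
    calc f p ≤ μ (p + 1) / l := h1
      _ ≤ c₂ * ((p : ℝ) + 1) ^ (-(2 * m)) / l := by
          apply div_le_div_of_nonneg_right (hμub p) hl.le
      _ = c₂ / l * ((p : ℝ) + 1) ^ (-(2 * m)) := by ring
  have hsumf : Summable f :=
    Summable.of_nonneg_of_le hf0 hfle ((aux_summable hm).mul_left (c₂ / l))
  set L : ℝ := l ^ (-(1 / (2 * m))) with hL
  have hLpos : 0 < L := Real.rpow_pos_of_pos hl _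
  have hL1 : 1 ≤ L := Real.one_le_rpow_of_pos_of_le_one_of_nonpos hl hl1 (neg_nonpos.mpr (by positivity))
  have hL2m : L ^ (2 * m) = l⁻¹ := by
    rw [hL, ← Real.rpow_mul hl.le]
    have he : -(1 / (2 * m)) * (2 * m) = -1 := by field_simp
    rw [he, Real.rpow_neg_one]
  constructor
  · -- lower bound
    set N : ℕ := ⌊L⌋₊ with hN
    have hN1 : 1 ≤ N := Nat.le_floor (by exact_mod_cast hL1)
    have hNL : (N : ℝ) ≤ L := Nat.floor_le hLpos.le
    have hN1' : (1 : ℝ) ≤ (N : ℝ) := by exact_mod_cast hN1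
    have hLN : L ≤ 2 * N := by
      have h1 : L < N + 1 := Nat.lt_floor_add_one L
      linarith
    have hterm : ∀ p ∈ Finset.range N, c₁ / (c₁ + 1) ≤ f p := by
      intro p hp
      have hpN : (p : ℝ) + 1 ≤ (N : ℝ) := by
        have := Finset.mem_range.1 hp
        exact_mod_cast this
      have hpow : 0 < ((p : ℝ) + 1) ^ (2 * m) := Real.rpow_pos_of_pos (hqpos p) _
      have hql : l ≤ ((p : ℝ) + 1) ^ (-(2 * m)) := by
        have hq2m : ((p : ℝ) + 1) ^ (2 * m) ≤ l⁻¹ := by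
          rw [← hL2m]
          exact Real.rpow_le_rpow (hqpos p).le (le_trans hpN hNL) h2m.le
        have h3 := one_div_le_one_div_of_le hpow hq2m
        rw [one_div, one_div, inv_inv] at h3
        rwa [Real.rpow_neg (hqpos p).le]
      have ht0 : 0 < c₁ * ((p : ℝ) + 1) ^ (-(2 * m)) := by positivity
      have h4 : c₁ * ((p : ℝ) + 1) ^ (-(2 * m)) / (c₁ * ((p : ℝ) + 1) ^ (-(2 * m)) + l) ≤ f p :=
        frac_mono hl ht0.le (hμlb p)
      refine le_trans ?_ h4
      rw [div_le_div_iff₀ (by linarith) (by positivity)]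
      nlinarith
    calc c₁ / (2 * (c₁ + 1)) * L ≤ c₁ / (c₁ + 1) * (N : ℝ) := by
          rw [div_mul_eq_mul_div, div_mul_eq_mul_div, div_le_div_iff₀ (by positivity) (by positivity)]
          nlinarith [mul_le_mul_of_nonneg_right (mul_le_mul_of_nonneg_left hLN hc₁.le)
            (by linarith : (0:ℝ) ≤ c₁ + 1)]
      _ ≤ ∑ p ∈ Finset.range N, f p := by
          have := Finset.card_nsmul_le_sum (Finset.range N) f (c₁ / (c₁ + 1)) hterm
          rw [Finset.card_range, nsmul_eq_mul] at this
          linarith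
      _ ≤ ∑' p : ℕ, f p := Summable.sum_le_tsum _ (fun i _ => hf0 i) hsumf
  · -- upper bound
    obtain ⟨A, hAdef⟩ : ∃ A : ℝ, A = (c₂ / l) ^ (1 / (2 * m)) := ⟨_, rfl⟩
    have hA : 0 < A := hAdef ▸ Real.rpow_pos_of_pos (div_pos hc₂ hl) _
    obtain ⟨N, hN⟩ : ∃ N : ℕ, N = ⌈A⌉₊ := ⟨_, rfl⟩
    have hN1 : 1 ≤ N := hN ▸ Nat.one_le_ceil_iff.mpr hA
    have hAN : A ≤ (N : ℝ) := hN ▸ Nat.le_ceil A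
    have hNA : (N : ℝ) ≤ A + 1 := hN ▸ (Nat.ceil_lt_add_one hA.le).le
    have hN0 : (0 : ℝ) < (N : ℝ) := lt_of_lt_of_le hA hAN
    have hA2m : A ^ (2 * m) = c₂ / l := by
      rw [hAdef, ← Real.rpow_mul (div_pos hc₂ hl).le]
      rw [one_div, inv_mul_cancel₀ h2m.ne', Real.rpow_one]
    have hsplit := (Summable.sum_add_tsum_nat_add N hsumf).symm
    have htail : (∑' p : ℕ, f (p + N)) ≤ c₂ / l * ((N : ℝ) ^ (-(2 * m - 1)) / (2 * m - 1)) := by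
      have hsum2 : Summable (fun p : ℕ => f (p + N)) := (summable_nat_add_iff N).2 hsumf
      have hsum3 : Summable (fun p : ℕ => ((↑(p + N) : ℝ) + 1) ^ (-(2 * m))) :=
        (summable_nat_add_iff N).2 (aux_summable hm)
      calc (∑' p : ℕ, f (p + N))
          ≤ ∑' p : ℕ, c₂ / l * ((↑(p + N) : ℝ) + 1) ^ (-(2 * m)) :=
            Summable.tsum_le_tsum (fun p => hfle (p + N)) hsum2 (hsum3.mul_left _)
        _ = c₂ / l * ∑' p : ℕ, ((↑(p + N) : ℝ) + 1) ^ (-(2 * m)) := tsum_mul_left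
        _ ≤ c₂ / l * ((N : ℝ) ^ (-(2 * m - 1)) / (2 * m - 1)) := by
            apply mul_le_mul_of_nonneg_left (tail_bound hm hN1) (by positivity)
    have hhead : (∑ p ∈ Finset.range N, f p) ≤ (N : ℝ) := by
      have := Finset.sum_le_card_nsmul (Finset.range N) f 1 (fun p _ => hf1 p)
      rwa [Finset.card_range, nsmul_eq_mul, mul_one] at this
    have hmid : c₂ / l * (N : ℝ) ^ (-(2 * m - 1)) ≤ A := by
      have h1 : (N : ℝ) ^ (-(2 * m - 1)) ≤ A ^ (-(2 * m - 1)) :=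
        Real.rpow_le_rpow_of_nonpos hA hAN (by linarith)
      calc c₂ / l * (N : ℝ) ^ (-(2 * m - 1)) ≤ c₂ / l * A ^ (-(2 * m - 1)) :=
            mul_le_mul_of_nonneg_left h1 (by positivity)
        _ = A ^ (2 * m) * A ^ (-(2 * m - 1)) := by rw [hA2m]
        _ = A := by
            rw [← Real.rpow_add hA]
            norm_num
    have hAL : A = c₂ ^ (1 / (2 * m)) * L := by
      rw [hAdef, hL, Real.div_rpow hc₂.le hl.le, Real.rpow_neg hl.le, div_eq_mul_inv]
    have hB : (0 : ℝ) ≤ c₂ ^ (1 / (2 * m)) := (Real.rpow_pos_of_pos hc₂ _).le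
    have hfin : (N : ℝ) + c₂ / l * ((N : ℝ) ^ (-(2 * m - 1)) / (2 * m - 1)) ≤
        (c₂ ^ (1 / (2 * m)) * (1 + 1 / (2 * m - 1)) + 1) * L := by
      have h2 : c₂ / l * ((N : ℝ) ^ (-(2 * m - 1)) / (2 * m - 1)) ≤ A / (2 * m - 1) := by
        rw [mul_div_assoc'] 
        exact div_le_div_of_nonneg_right hmid hs.le
      have h3 : (N : ℝ) + c₂ / l * ((N : ℝ) ^ (-(2 * m - 1)) / (2 * m - 1)) ≤
          A + 1 + A / (2 * m - 1) := by linarith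
      refine h3.trans ?_
      rw [hAL]
      have h4 : 0 ≤ c₂ ^ (1 / (2 * m)) * L / (2 * m - 1) := by positivity
      have h5 : c₂ ^ (1 / (2 * m)) * L / (2 * m - 1) = c₂ ^ (1 / (2 * m)) * (1 / (2 * m - 1)) * L := by
        field_simp
      have h6 : (c₂ ^ (1 / (2 * m)) * (1 + 1 / (2 * m - 1)) + 1) * L =
          c₂ ^ (1 / (2 * m)) * L + c₂ ^ (1 / (2 * m)) * (1 / (2 * m - 1)) * L + L := by ring
      rw [h6]
      linarith [h5, hL1]
    calc (∑' p : ℕ, f p) = (∑ p ∈ Finset.range N, f p) + ∑' p : ℕ, f (p + N) := hsplit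
      _ ≤ (N : ℝ) + c₂ / l * ((N : ℝ) ^ (-(2 * m - 1)) / (2 * m - 1)) := add_le_add hhead htail
      _ ≤ _ := hfin


/-- Lemma 3.2(2): for a `d`-component additive RKHS whose componentwise
eigenvalues satisfy `c₁ p^{-2m} ≤ μ_p^{(k)} ≤ c₂ p^{-2m}` (`p ≥ 1`, `m > 1/2`), there
are constants `0 < C₁ ≤ C₂` depending only on `c₁, c₂, m` with
`C₁ d λ^{-1/(2m)} ≤ ∑_ν (1+λ/μ_ν)^{-1} ≤ C₂ d λ^{-1/(2m)}` for all `λ ∈ (0,1]`, `d ≥ 1`.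
The total eigenvalue sequence interleaves the components, so the effective dimension is
the sum over components `k` of `∑_{p≥1} μ_p^{(k)}/(μ_p^{(k)}+λ)`. -/
theorem stmt17 (m c₁ c₂ : ℝ) (hm : 1 / 2 < m) (hc₁ : 0 < c₁) (hc₁₂ : c₁ ≤ c₂) :
    ∃ C₁ C₂ : ℝ, 0 < C₁ ∧ C₁ ≤ C₂ ∧
      ∀ (d : ℕ), 1 ≤ d → ∀ (μc : Fin d → ℕ → ℝ),
        (∀ k (p : ℕ), 1 ≤ p →
          c₁ * (p : ℝ) ^ (-(2 * m)) ≤ μc k p ∧ μc k p ≤ c₂ * (p : ℝ) ^ (-(2 * m))) →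
        ∀ l : ℝ, 0 < l → l ≤ 1 →
          C₁ * d * l ^ (-(1 / (2 * m))) ≤
              (∑ k : Fin d, ∑' p : ℕ, μc k (p + 1) / (μc k (p + 1) + l)) ∧
            (∑ k : Fin d, ∑' p : ℕ, μc k (p + 1) / (μc k (p + 1) + l)) ≤
              C₂ * d * l ^ (-(1 / (2 * m))) := by
  have hc₂ : 0 < c₂ := lt_of_lt_of_le hc₁ hc₁₂
  have hs : (0 : ℝ) < 2 * m - 1 := by linarith
  refine ⟨c₁ / (2 * (c₁ + 1)), c₂ ^ (1 / (2 * m)) * (1 + 1 / (2 * m - 1)) + 1,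
    by positivity, ?_, ?_⟩
  · have h1 : c₁ / (2 * (c₁ + 1)) ≤ 1 := by
      rw [div_le_one (by linarith)]; linarith
    have h2 : 0 < c₂ ^ (1 / (2 * m)) * (1 + 1 / (2 * m - 1)) := by positivity
    linarith
  · intro d hd μc hμc l hl hl1
    have hcb := fun k : Fin d => comp_bound hm hc₁ hc₁₂ hl hl1 (μc k) (hμc k)
    constructor
    · calc c₁ / (2 * (c₁ + 1)) * d * l ^ (-(1 / (2 * m)))
          = ∑ _k : Fin d, c₁ / (2 * (c₁ + 1)) * l ^ (-(1 / (2 * m))) := by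
            rw [Finset.sum_const, Finset.card_univ, Fintype.card_fin, nsmul_eq_mul]; ring
        _ ≤ ∑ k : Fin d, ∑' p : ℕ, μc k (p + 1) / (μc k (p + 1) + l) :=
            Finset.sum_le_sum fun k _ => (hcb k).1
    · calc (∑ k : Fin d, ∑' p : ℕ, μc k (p + 1) / (μc k (p + 1) + l))
          ≤ ∑ _k : Fin d, (c₂ ^ (1 / (2 * m)) * (1 + 1 / (2 * m - 1)) + 1) * l ^ (-(1 / (2 * m))) :=
            Finset.sum_le_sum fun k _ => (hcb k).2
        _ = (c₂ ^ (1 / (2 * m)) * (1 + 1 / (2 * m - 1)) + 1) * d * l ^ (-(1 / (2 * m))) := by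
            rw [Finset.sum_const, Finset.card_univ, Fintype.card_fin, nsmul_eq_mul]; ring
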